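/- Let (X,T) be an NDS, Z ⊂ X_0, and let f be an equicontinuous potential. Then P_L(T,f,Z) = sup_𝒰 liminf_{n→∞} (1/n)·log Q_n(T,f,Z,𝒰) = lim_{diam(𝒰)→0} liminf_{n→∞} (1/n)·log Q_n(T,f,Z,𝒰) and P_U(T,f,Z) = sup_𝒰 limsup_{n→∞} (1/n)·log Q_n(T,f,Z,𝒰) = lim_{diam(𝒰)→0} limsup_{n→∞} (1/n)·log Q_n(T,f,Z,𝒰), where 𝒰 ranges over all sequences of open covers of the X_k possessing a Lebesgue number. -/

import Mathlib

open Filter Set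
open scoped ENNReal NNReal

noncomputable section

namespace NDS

variable {X : ℕ → Type*}

/-- The orbit maps `T_k^j : X k → X (k+j)` of a nonautonomous system. -/
def iterFrom (T : ∀ k, X k → X (k + 1)) (k : ℕ) : ∀ j, X k → X (k + j)
  | 0 => fun x => x
  | j + 1 => fun x => T (k + j) (iterFrom T k j x)

/-- The orbit maps `T^j = T_{j-1} ∘ ⋯ ∘ T_0 : X 0 → X j`. -/
def iter (T : ∀ k, X k → X (k + 1)) : ∀ j, X 0 → X j
  | 0 => fun x => x
  | j + 1 => fun x => T j (iter T j x)

variable [∀ k, MetricSpace (X k)]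

/-- The `n`-th Bowen metric on `X 0`:  `d_n^T(x,y) = max_{0 ≤ j ≤ n-1} d_j (T^j x) (T^j y)`. -/
def bowenDist (T : ∀ k, X k → X (k + 1)) (n : ℕ) (x y : X 0) : ℝ :=
  (((Finset.range n).sup fun j => nndist (iter T j x) (iter T j y) : ℝ≥0) : ℝ)

/-- The open Bowen ball `B_n^T(x, ε)`. -/
def bowenBall (T : ∀ k, X k → X (k + 1)) (n : ℕ) (x : X 0) (ε : ℝ) : Set (X 0) :=
  {y | bowenDist T n x y < ε}

/-- The closed Bowen ball `clB_n^T(x, ε)`. -/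
def bowenClosedBall (T : ∀ k, X k → X (k + 1)) (n : ℕ) (x : X 0) (ε : ℝ) : Set (X 0) :=
  {y | bowenDist T n x y ≤ ε}

/-- Birkhoff sums starting at level `k`:  `S_{k,n}^T f = Σ_{j<n} f_{k+j} ∘ T_k^j`. -/
def birkFrom (T : ∀ k, X k → X (k + 1)) (f : ∀ k, X k → ℝ) (k n : ℕ) (x : X k) : ℝ :=
  ∑ j ∈ Finset.range n, f (k + j) (iterFrom T k j x)

/-- Birkhoff sums `S_n^T f = Σ_{j<n} f_j ∘ T^j` on `X 0`. -/
def birk (T : ∀ k, X k → X (k + 1)) (f : ∀ k, X k → ℝ) (n : ℕ) (x : X 0) : ℝ :=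
  ∑ j ∈ Finset.range n, f j (iter T j x)

/-- A potential `f = {f_k}` is equicontinuous. -/
def EquicontPotential (f : ∀ k, X k → ℝ) : Prop :=
  ∀ ε : ℝ, 0 < ε → ∃ δ : ℝ, 0 < δ ∧
    ∀ k, ∀ x y : X k, dist x y < δ → |f k x - f k y| < ε

/-- The sequence of maps `T = {T_k}` is equicontinuous. -/
def EquicontMaps (T : ∀ k, X k → X (k + 1)) : Prop :=
  ∀ ε : ℝ, 0 < ε → ∃ δ : ℝ, 0 < δ ∧
    ∀ k, ∀ x y : X k, dist x y < δ → dist (T k x) (T k y) < ε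

/-- `F` is an `(n,ε)`-spanning set for `Z`. -/
def IsSpanning (T : ∀ k, X k → X (k + 1)) (n : ℕ) (ε : ℝ) (Z : Set (X 0))
    (F : Finset (X 0)) : Prop :=
  ∀ x ∈ Z, ∃ y ∈ F, bowenDist T n x y ≤ ε

/-- `E` is an `(n,ε)`-separated set for `Z`. -/
def IsSeparated (T : ∀ k, X k → X (k + 1)) (n : ℕ) (ε : ℝ) (Z : Set (X 0))
    (E : Finset (X 0)) : Prop :=
  ↑E ⊆ Z ∧ ∀ x ∈ E, ∀ y ∈ E, x ≠ y → ε < bowenDist T n x y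

/-- The partition sum `Σ_{x ∈ F} e^{S_n^T f(x)}` (valued in `ℝ≥0∞`). -/
def partSum (T : ∀ k, X k → X (k + 1)) (f : ∀ k, X k → ℝ) (n : ℕ) (F : Finset (X 0)) : ℝ≥0∞ :=
  ∑ x ∈ F, ENNReal.ofReal (Real.exp (birk T f n x))

/-- `Q_n(T,f,Z,ε)`, infimum over `(n,ε)`-spanning sets. -/
def Qn (T : ∀ k, X k → X (k + 1)) (f : ∀ k, X k → ℝ) (Z : Set (X 0)) (n : ℕ) (ε : ℝ) : ℝ≥0∞ :=
  ⨅ (F : Finset (X 0)) (_ : IsSpanning T n ε Z F), partSum T f n F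

/-- `P_n(T,f,Z,ε)`, supremum over `(n,ε)`-separated sets. -/
def Pn (T : ∀ k, X k → X (k + 1)) (f : ∀ k, X k → ℝ) (Z : Set (X 0)) (n : ℕ) (ε : ℝ) : ℝ≥0∞ :=
  ⨆ (E : Finset (X 0)) (_ : IsSeparated T n ε Z E), partSum T f n E

/-- `liminf_n (1/n) log u n` (in `EReal`). -/
def lowRate (u : ℕ → ℝ≥0∞) : EReal :=
  Filter.atTop.liminf fun n : ℕ => (((n : ℝ)⁻¹ : ℝ) : EReal) * ENNReal.log (u n)

/-- `limsup_n (1/n) log u n` (in `EReal`). -/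
def upRate (u : ℕ → ℝ≥0∞) : EReal :=
  Filter.atTop.limsup fun n : ℕ => (((n : ℝ)⁻¹ : ℝ) : EReal) * ENNReal.log (u n)

/-- Lower spanning topological pressure `Q_low(T,f,Z)`; the limit as `ε → 0` is realised as a
supremum over `ε > 0`, the quantity being monotone in `ε`. -/
def Qlow (T : ∀ k, X k → X (k + 1)) (f : ∀ k, X k → ℝ) (Z : Set (X 0)) : EReal :=
  ⨆ (ε : ℝ) (_ : 0 < ε), lowRate fun n => Qn T f Z n ε

/-- Upper spanning topological pressure `Q_up(T,f,Z)`. -/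
def Qup (T : ∀ k, X k → X (k + 1)) (f : ∀ k, X k → ℝ) (Z : Set (X 0)) : EReal :=
  ⨆ (ε : ℝ) (_ : 0 < ε), upRate fun n => Qn T f Z n ε

/-- Lower separated topological pressure `P_low(T,f,Z)`. -/
def Plow (T : ∀ k, X k → X (k + 1)) (f : ∀ k, X k → ℝ) (Z : Set (X 0)) : EReal :=
  ⨆ (ε : ℝ) (_ : 0 < ε), lowRate fun n => Pn T f Z n ε

/-- Upper separated topological pressure `P_up(T,f,Z)`. -/
def Pup (T : ∀ k, X k → X (k + 1)) (f : ∀ k, X k → ℝ) (Z : Set (X 0)) : EReal :=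
  ⨆ (ε : ℝ) (_ : 0 < ε), upRate fun n => Pn T f Z n ε

/-- The critical value `inf {s : M s = 0}` of a "measure profile" `M`, as an extended real. -/
def crit (M : ℝ → ℝ≥0∞) : EReal :=
  sInf (Real.toEReal '' {s : ℝ | M s = 0})

/-- The critical value `sup {s : M s = ∞}` of a "measure profile" `M`, as an extended real. -/
def critSup (M : ℝ → ℝ≥0∞) : EReal :=
  sSup (Real.toEReal '' {s : ℝ | M s = ⊤})

/-- A countable family of Bowen balls (recorded by their (center, order) data) which is an
`(N,ε)`-cover of `Z`. -/
def IsBowenCover (T : ∀ k, X k → X (k + 1)) (N : ℕ) (ε : ℝ) (Z : Set (X 0))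
    (C : Set (X 0 × ℕ)) : Prop :=
  C.Countable ∧ (∀ p ∈ C, N ≤ p.2) ∧ Z ⊆ ⋃ p ∈ C, bowenBall T p.2 p.1 ε

/-- A countable disjoint family of closed Bowen balls with centers in `Z` and orders `≥ N`:
an `(N,ε)`-packing of `Z`. -/
def IsBowenPacking (T : ∀ k, X k → X (k + 1)) (N : ℕ) (ε : ℝ) (Z : Set (X 0))
    (P : Set (X 0 × ℕ)) : Prop :=
  P.Countable ∧ (∀ p ∈ P, p.1 ∈ Z ∧ N ≤ p.2) ∧
    ∀ p ∈ P, ∀ q ∈ P, p ≠ q →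
      Disjoint (bowenClosedBall T p.2 p.1 ε) (bowenClosedBall T q.2 q.1 ε)

/-- `Σ_i exp (-n_i s + S_{n_i}^T f (x_i))` over a family of (center, order) pairs. -/
def ballSum (T : ∀ k, X k → X (k + 1)) (f : ∀ k, X k → ℝ) (s : ℝ) (C : Set (X 0 × ℕ)) : ℝ≥0∞ :=
  ∑' p : C, ENNReal.ofReal (Real.exp (-(p.1.2 : ℝ) * s + birk T f p.1.2 p.1.1))

/-- The Hausdorff-type pre-measure `M^s_{N,ε}(T,f,Z)`. -/
def bowenPreMeas (T : ∀ k, X k → X (k + 1)) (f : ∀ k, X k → ℝ) (Z : Set (X 0))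
    (s : ℝ) (N : ℕ) (ε : ℝ) : ℝ≥0∞ :=
  ⨅ (C : Set (X 0 × ℕ)) (_ : IsBowenCover T N ε Z C), ballSum T f s C

/-- `M^s_ε(T,f,Z) = lim_{N → ∞} M^s_{N,ε}(T,f,Z)` (an increasing limit, i.e. a supremum). -/
def bowenMeas (T : ∀ k, X k → X (k + 1)) (f : ∀ k, X k → ℝ) (Z : Set (X 0))
    (s : ℝ) (ε : ℝ) : ℝ≥0∞ :=
  ⨆ N : ℕ, bowenPreMeas T f Z s N ε

/-- `P^B(T,f,Z,ε)`: the critical value of `s ↦ M^s_ε(T,f,Z)`. -/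
def PBe (T : ∀ k, X k → X (k + 1)) (f : ∀ k, X k → ℝ) (Z : Set (X 0)) (ε : ℝ) : EReal :=
  crit fun s => bowenMeas T f Z s ε

/-- The Bowen (Pesin–Pitskel') topological pressure `P^B(T,f,Z)`; the limit as `ε → 0` is
realised as a supremum over `ε > 0` by monotonicity. -/
def PB (T : ∀ k, X k → X (k + 1)) (f : ∀ k, X k → ℝ) (Z : Set (X 0)) : EReal :=
  ⨆ (ε : ℝ) (_ : 0 < ε), PBe T f Z ε

/-- The packing pre-measure `𝒫^s_{N,ε}(T,f,Z)`. -/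
def packPre (T : ∀ k, X k → X (k + 1)) (f : ∀ k, X k → ℝ) (Z : Set (X 0))
    (s : ℝ) (N : ℕ) (ε : ℝ) : ℝ≥0∞ :=
  ⨆ (P : Set (X 0 × ℕ)) (_ : IsBowenPacking T N ε Z P), ballSum T f s P

/-- The packing content `𝒫^s_{∞,ε}(T,f,Z) = lim_{N→∞} 𝒫^s_{N,ε}` (a decreasing limit, i.e. an
infimum). -/
def packContent (T : ∀ k, X k → X (k + 1)) (f : ∀ k, X k → ℝ) (Z : Set (X 0))
    (s : ℝ) (ε : ℝ) : ℝ≥0∞ :=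
  ⨅ N : ℕ, packPre T f Z s N ε

/-- The packing measure `𝒫^s_ε(T,f,Z)`, obtained from the content by countable decompositions. -/
def packMeas (T : ∀ k, X k → X (k + 1)) (f : ∀ k, X k → ℝ) (Z : Set (X 0))
    (s : ℝ) (ε : ℝ) : ℝ≥0∞ :=
  ⨅ (D : ℕ → Set (X 0)) (_ : Z ⊆ ⋃ i, D i), ∑' i, packContent T f (D i) s ε

/-- `P^P(T,f,Z,ε)`: the critical value of `s ↦ 𝒫^s_ε(T,f,Z)`. -/
def PPe (T : ∀ k, X k → X (k + 1)) (f : ∀ k, X k → ℝ) (Z : Set (X 0)) (ε : ℝ) : EReal :=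
  crit fun s => packMeas T f Z s ε

/-- The packing topological pressure `P^P(T,f,Z)`. -/
def PP (T : ∀ k, X k → X (k + 1)) (f : ∀ k, X k → ℝ) (Z : Set (X 0)) : EReal :=
  ⨆ (ε : ℝ) (_ : 0 < ε), PPe T f Z ε

end NDS

namespace NDS

open scoped Classical

variable {X : ℕ → Type*} [∀ k, MetricSpace (X k)]

/-- A sequence `𝒰 = {𝒰_k}` of open covers of the spaces `X k`. -/
structure CoverSeq (X : ℕ → Type*) [∀ k, MetricSpace (X k)] where
  mem : ∀ k, Set (Set (X k))
  isOpen' : ∀ k, ∀ u ∈ mem k, IsOpen u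
  covers' : ∀ k, ∀ x : X k, ∃ u ∈ mem k, x ∈ u

/-- `𝒰` has a (uniform) Lebesgue number. -/
def HasLebesgueNumber (𝒰 : CoverSeq X) : Prop :=
  ∃ δ : ℝ, 0 < δ ∧ ∀ k, ∀ x : X k, ∃ u ∈ 𝒰.mem k, Metric.ball x δ ⊆ u

/-- `diam 𝒰 = sup_k sup_{u ∈ 𝒰_k} diam u` (in `ℝ≥0∞`). -/
def coverDiam (𝒰 : CoverSeq X) : ℝ≥0∞ :=
  ⨆ (k : ℕ), ⨆ u ∈ 𝒰.mem k, EMetric.diam u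

/-- The cylinder `X_0[U] = ⋂_{j<n} (T^j)⁻¹ (U_j)` associated with a string `v` of length `n`. -/
def cylinder (T : ∀ k, X k → X (k + 1)) (n : ℕ) (v : ∀ j, Set (X j)) : Set (X 0) :=
  ⋂ (j : ℕ) (_ : j < n), iter T j ⁻¹' v j

/-- `exp(S̲_n^T f (U))`, where `S̲_n^T f (U) = inf_{x ∈ X_0[U]} S_n^T f x` (`= -∞`, i.e. the
weight is `0`, when the cylinder is empty). -/
def cylWeightInf (T : ∀ k, X k → X (k + 1)) (f : ∀ k, X k → ℝ) (n : ℕ)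
    (v : ∀ j, Set (X j)) : ℝ≥0∞ :=
  if (cylinder T n v).Nonempty then
    ⨅ x ∈ cylinder T n v, ENNReal.ofReal (Real.exp (birk T f n x))
  else 0

/-- `Q_n(T,f,Z,𝒰)`: infimum over families `Γ ⊆ 𝒰_0^n` of strings of length `n` covering `Z`. -/
def QnCov (T : ∀ k, X k → X (k + 1)) (f : ∀ k, X k → ℝ) (Z : Set (X 0)) (n : ℕ)
    (𝒰 : CoverSeq X) : ℝ≥0∞ :=
  ⨅ (Γ : Set (∀ j, Set (X j)))
    (_ : (∀ v ∈ Γ, ∀ j < n, v j ∈ 𝒰.mem j) ∧ Z ⊆ ⋃ v ∈ Γ, cylinder T n v),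
    ∑' v : Γ, cylWeightInf T f n v.1

end NDS

/-! Spanning sets, separated sets and the strings of a cover dominate one another cyclically, up
to a factor `e^{nη}` at level `n`. A maximal separated set spans (compactness); the cylinders of a
cover with Lebesgue number `δ` contain Bowen balls of radius below `δ`; and a separated set meets
each cylinder of a cover of diameter at most `ε` in at most one point, while equicontinuity makes
`S_n f` vary by at most `nη` along a cylinder. Exponential growth rates turn the factor into an
additive `η`, which is arbitrary. The last comparison holds uniformly over all covers of small
diameter, which yields the limit as `diam 𝒰 → 0`. -/

open scoped Topology

namespace EReal

theorem exists_pos_coe_add_lt {a b : EReal} (h : a < b) :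
    ∃ η : ℝ, 0 < η ∧ (η : EReal) + a < b := by
  obtain ⟨q, haq, hqb⟩ := exists_between_coe_real h
  obtain ⟨q', hqq', hq'b⟩ := exists_between_coe_real hqb
  refine ⟨q' - q, by linarith [EReal.coe_lt_coe_iff.1 hqq'], ?_⟩
  calc ((q' - q : ℝ) : EReal) + a < ((q' - q : ℝ) : EReal) + q := add_lt_add_left_coe haq _
    _ = q' := by norm_cast; ring
    _ < b := hq'b

end EReal

namespace NDS

section GrowthRate

/-- Abstracts `lowRate` and `upRate`, so that lower and upper pressures are treated at once. -/
def IsGrowthRate (R : (ℕ → ℝ≥0∞) → EReal) : Prop :=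
  ∀ (η : ℝ) (u v : ℕ → ℝ≥0∞), (∀ n, u n ≤ ENNReal.ofReal (Real.exp (n * η)) * v n) →
    R u ≤ η + R v

variable {R : (ℕ → ℝ≥0∞) → EReal}

theorem IsGrowthRate.mono (hR : IsGrowthRate R) {u v : ℕ → ℝ≥0∞} (h : ∀ n, u n ≤ v n) :
    R u ≤ R v := by
  simpa using hR 0 u v (by simpa using h)

theorem inv_mul_log_le_coe_add {n : ℕ} (hn : n ≠ 0) {η : ℝ} {a b : ℝ≥0∞}
    (h : a ≤ ENNReal.ofReal (Real.exp (n * η)) * b) :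
    (((n : ℝ)⁻¹ : ℝ) : EReal) * ENNReal.log a ≤
      η + (((n : ℝ)⁻¹ : ℝ) : EReal) * ENNReal.log b := by
  have hn' : (0 : ℝ) < (n : ℝ)⁻¹ := by positivity
  calc (((n : ℝ)⁻¹ : ℝ) : EReal) * ENNReal.log a
      ≤ (((n : ℝ)⁻¹ : ℝ) : EReal) * (((n * η : ℝ) : EReal) + ENNReal.log b) := by
        rw [← Real.log_exp (n * η), ← ENNReal.log_ofReal_of_pos (Real.exp_pos _),
          ← ENNReal.log_mul_add]
        exact mul_le_mul_of_nonneg_left (ENNReal.log_le_log h) (EReal.coe_nonneg.2 hn'.le)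
    _ = η + (((n : ℝ)⁻¹ : ℝ) : EReal) * ENNReal.log b := by
        rw [EReal.left_distrib_of_nonneg_of_ne_top (EReal.coe_nonneg.2 hn'.le)
          (EReal.coe_ne_top _), ← EReal.coe_mul, inv_mul_cancel_left₀ (by positivity)]

theorem isGrowthRate_lowRate : IsGrowthRate lowRate := fun η u v h =>
  calc lowRate u
      ≤ atTop.liminf ((fun _ => (η : EReal)) +
          fun n : ℕ => (((n : ℝ)⁻¹ : ℝ) : EReal) * ENNReal.log (v n)) :=
        liminf_le_liminf ((eventually_ne_atTop 0).mono fun n hn => inv_mul_log_le_coe_add hn (h n))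
    _ ≤ atTop.limsup (fun _ : ℕ => (η : EReal)) + lowRate v :=
        EReal.liminf_add_le (.inl (by simp)) (.inl (by simp))
    _ = η + lowRate v := by rw [limsup_const]

theorem isGrowthRate_upRate : IsGrowthRate upRate := fun η u v h =>
  calc upRate u
      ≤ atTop.limsup ((fun _ => (η : EReal)) +
          fun n : ℕ => (((n : ℝ)⁻¹ : ℝ) : EReal) * ENNReal.log (v n)) :=
        limsup_le_limsup ((eventually_ne_atTop 0).mono fun n hn => inv_mul_log_le_coe_add hn (h n))
    _ ≤ atTop.limsup (fun _ : ℕ => (η : EReal)) + upRate v :=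
        EReal.limsup_add_le (.inl (by simp)) (.inl (by simp))
    _ = η + upRate v := by rw [limsup_const]

end GrowthRate

variable {X : ℕ → Type*} (T : ∀ k, X k → X (k + 1)) {n : ℕ}

section BowenMetric

variable [∀ k, MetricSpace (X k)]

theorem continuous_iter (hT : ∀ k, Continuous (T k)) : ∀ j, Continuous (iter T j)
  | 0 => continuous_id
  | j + 1 => (hT j).comp (continuous_iter hT j)

theorem bowenDist_le_iff {x y : X 0} {c : ℝ} (hc : 0 ≤ c) :
    bowenDist T n x y ≤ c ↔ ∀ j < n, dist (iter T j x) (iter T j y) ≤ c := by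
  lift c to ℝ≥0 using hc
  simp only [bowenDist, NNReal.coe_le_coe, Finset.sup_le_iff, Finset.mem_range, dist_nndist]

theorem dist_iter_le_bowenDist {j : ℕ} (hj : j < n) (x y : X 0) :
    dist (iter T j x) (iter T j y) ≤ bowenDist T n x y :=
  (bowenDist_le_iff T (NNReal.coe_nonneg _)).1 le_rfl j hj

theorem bowenDist_self (x : X 0) : bowenDist T n x x = 0 := by
  simp [bowenDist]

theorem bowenDist_comm (x y : X 0) : bowenDist T n x y = bowenDist T n y x := by
  simp only [bowenDist, nndist_comm]

theorem bowenDist_triangle (x y z : X 0) :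
    bowenDist T n x z ≤ bowenDist T n x y + bowenDist T n y z :=
  (bowenDist_le_iff T (add_nonneg (NNReal.coe_nonneg _) (NNReal.coe_nonneg _))).2 fun j hj =>
    (dist_triangle _ (iter T j y) _).trans
      (add_le_add (dist_iter_le_bowenDist T hj x y) (dist_iter_le_bowenDist T hj y z))

theorem continuous_bowenDist (hT : ∀ k, Continuous (T k)) (x : X 0) :
    Continuous (bowenDist T n x) :=
  NNReal.continuous_coe.comp <| Continuous.finset_sup_apply fun j _ =>
    continuous_const.nndist (continuous_iter T hT j)

theorem isOpen_bowenBall (hT : ∀ k, Continuous (T k)) (x : X 0) (ε : ℝ) :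
    IsOpen (bowenBall T n x ε) :=
  isOpen_lt (continuous_bowenDist T hT x) continuous_const

end BowenMetric

section SeparatedSpanning

variable [∀ k, MetricSpace (X k)] {Z : Set (X 0)} {ε : ℝ}

theorem IsSeparated.injOn {α : Type*} {E : Finset (X 0)} (hE : IsSeparated T n ε Z E)
    {g : X 0 → α} (hg : ∀ x ∈ E, ∀ y ∈ E, g x = g y → bowenDist T n x y ≤ ε) :
    Set.InjOn g E :=
  fun x hx y hy hxy => by_contra fun hne => (hg x hx y hy hxy).not_gt (hE.2 x hx y hy hne)

theorem IsSeparated.insert [DecidableEq (X 0)] {E : Finset (X 0)} (hE : IsSeparated T n ε Z E)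
    {x : X 0} (hxZ : x ∈ Z) (hx : ∀ y ∈ E, ε < bowenDist T n x y) :
    IsSeparated T n ε Z (insert x E) := by
  refine ⟨by simpa [Set.insert_subset_iff] using ⟨hxZ, hE.1⟩, fun a ha b hb hab => ?_⟩
  rcases Finset.mem_insert.1 ha with rfl | ha' <;> rcases Finset.mem_insert.1 hb with rfl | hb'
  · exact absurd rfl hab
  · exact hx b hb'
  · exact bowenDist_comm T b a ▸ hx a ha'
  · exact hE.2 a ha' b hb' hab

variable [∀ k, CompactSpace (X k)]

theorem bddAbove_card_isSeparated (hT : ∀ k, Continuous (T k)) (hε : 0 < ε) :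
    BddAbove {c | ∃ E : Finset (X 0), IsSeparated T n ε Z E ∧ E.card = c} := by
  obtain ⟨t, ht⟩ := isCompact_univ.elim_finite_subcover (fun x : X 0 => bowenBall T n x (ε / 2))
    (fun x => isOpen_bowenBall T hT x _)
    (fun x _ => mem_iUnion.2 ⟨x, by simp [bowenBall, bowenDist_self, hε]⟩)
  have hcenter : ∀ e : X 0, ∃ c ∈ t, bowenDist T n c e < ε / 2 := fun e => by
    simpa [bowenBall] using ht (mem_univ e)
  choose g hgt hg using hcenter
  refine ⟨t.card, ?_⟩
  rintro _ ⟨E, hE, rfl⟩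
  refine Finset.card_le_card_of_injOn g (fun e _ => hgt e) (hE.injOn T fun x _ y _ hxy => ?_)
  have hx := hg x
  have hy := hg y
  rw [hxy, bowenDist_comm] at hx
  linarith [bowenDist_triangle T (n := n) x (g y) y]

theorem exists_isSeparated_isSpanning (hT : ∀ k, Continuous (T k)) (hε : 0 < ε) :
    ∃ E : Finset (X 0), IsSeparated T n ε Z E ∧ IsSpanning T n ε Z E := by
  classical
  set S := {c | ∃ E : Finset (X 0), IsSeparated T n ε Z E ∧ E.card = c}
  have hbdd : BddAbove S := bddAbove_card_isSeparated T hT hε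
  have hempty : IsSeparated T n ε Z ∅ := ⟨by simp, by simp⟩
  obtain ⟨E, hE, hcard⟩ : sSup S ∈ S := Nat.sSup_mem ⟨0, ∅, hempty, rfl⟩ hbdd
  refine ⟨E, hE, fun x hx => ?_⟩
  by_contra! hfar
  have hxE : x ∉ E := fun h => (hfar x h).not_ge (by rw [bowenDist_self]; exact hε.le)
  have := le_csSup hbdd ⟨_, hE.insert T hx hfar, rfl⟩
  rw [Finset.card_insert_of_notMem hxE, hcard] at this
  omega

theorem Qn_le_Pn (hT : ∀ k, Continuous (T k)) (f : ∀ k, X k → ℝ) (hε : 0 < ε) (n : ℕ) :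
    Qn T f Z n ε ≤ Pn T f Z n ε := by
  obtain ⟨E, hsep, hspan⟩ := exists_isSeparated_isSpanning T (n := n) (Z := Z) hT hε
  exact (iInf₂_le E hspan).trans (le_iSup₂ (f := fun E _ => partSum T f n E) E hsep)

end SeparatedSpanning

section Cylinders

variable {f : ∀ k, X k → ℝ} {v : ∀ j, Set (X j)}

theorem cylWeightInf_le {x : X 0} (hx : x ∈ cylinder T n v) :
    cylWeightInf T f n v ≤ ENNReal.ofReal (Real.exp (birk T f n x)) := by
  rw [cylWeightInf, if_pos ⟨x, hx⟩]
  exact iInf₂_le x hx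

variable [∀ k, MetricSpace (X k)] {Z : Set (X 0)} {𝒰 : CoverSeq X} {ε δ η : ℝ}

theorem birk_le_birk_add (hδ : ∀ k, ∀ x y : X k, dist x y < δ → |f k x - f k y| < η)
    {x y : X 0} (h : ∀ j < n, dist (iter T j x) (iter T j y) < δ) :
    birk T f n x ≤ birk T f n y + n * η := by
  have hsum : ∑ j ∈ Finset.range n, (f j (iter T j x) - f j (iter T j y)) ≤
      ∑ _j ∈ Finset.range n, η := Finset.sum_le_sum fun j hj =>
    ((le_abs_self _).trans_lt (hδ j _ _ (h j (Finset.mem_range.1 hj)))).le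
  simp only [Finset.sum_sub_distrib, Finset.sum_const, Finset.card_range, nsmul_eq_mul] at hsum
  simp only [birk]
  linarith

theorem ofReal_exp_birk_le_mul (hδ : ∀ k, ∀ x y : X k, dist x y < δ → |f k x - f k y| < η)
    {x y : X 0} (h : ∀ j < n, dist (iter T j x) (iter T j y) < δ) :
    ENNReal.ofReal (Real.exp (birk T f n x)) ≤
      ENNReal.ofReal (Real.exp (n * η)) * ENNReal.ofReal (Real.exp (birk T f n y)) := by
  rw [← ENNReal.ofReal_mul (Real.exp_pos _).le, ← Real.exp_add]
  exact ENNReal.ofReal_le_ofReal (Real.exp_le_exp.2 (by linarith [birk_le_birk_add T hδ h]))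

theorem edist_iter_le_coverDiam (hv : ∀ j < n, v j ∈ 𝒰.mem j) {x y : X 0}
    (hx : x ∈ cylinder T n v) (hy : y ∈ cylinder T n v) {j : ℕ} (hj : j < n) :
    edist (iter T j x) (iter T j y) ≤ coverDiam 𝒰 :=
  calc edist (iter T j x) (iter T j y) ≤ Metric.ediam (v j) :=
        Metric.edist_le_ediam_of_mem (mem_iInter₂.1 hx j hj) (mem_iInter₂.1 hy j hj)
    _ ≤ coverDiam 𝒰 := le_iSup₂_of_le j (v j) (le_iSup_of_le (hv j hj) le_rfl)

theorem ofReal_exp_birk_le_mul_cylWeightInf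
    (hδ : ∀ k, ∀ x y : X k, dist x y < δ → |f k x - f k y| < η)
    (hdiam : coverDiam 𝒰 < ENNReal.ofReal δ) (hv : ∀ j < n, v j ∈ 𝒰.mem j) {x : X 0}
    (hx : x ∈ cylinder T n v) :
    ENNReal.ofReal (Real.exp (birk T f n x)) ≤
      ENNReal.ofReal (Real.exp (n * η)) * cylWeightInf T f n v := by
  have hc : ENNReal.ofReal (Real.exp (n * η)) ≠ 0 := by simp [Real.exp_pos]
  rw [cylWeightInf, if_pos ⟨x, hx⟩, ENNReal.mul_iInf_of_ne hc ENNReal.ofReal_ne_top]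
  refine le_iInf fun y => ?_
  rw [ENNReal.mul_iInf_of_ne hc ENNReal.ofReal_ne_top]
  exact le_iInf fun hy => ofReal_exp_birk_le_mul T hδ fun j hj =>
    edist_lt_ofReal.1 ((edist_iter_le_coverDiam T hv hx hy hj).trans_lt hdiam)

theorem QnCov_le_Qn (hLeb : ∀ k, ∀ x : X k, ∃ u ∈ 𝒰.mem k, Metric.ball x δ ⊆ u)
    (hε : 0 ≤ ε) (hεδ : ε < δ) (n : ℕ) : QnCov T f Z n 𝒰 ≤ Qn T f Z n ε := by
  classical
  refine le_iInf₂ fun F hF => ?_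
  choose U hU𝒰 hU using hLeb
  set w : X 0 → ∀ j, Set (X j) := fun y j => U j (iter T j y)
  have hmem : ∀ y z : X 0, bowenDist T n z y < δ → z ∈ cylinder T n (w y) :=
    fun y z h => mem_iInter₂.2 fun j hj =>
      hU j _ ((dist_iter_le_bowenDist T hj z y).trans_lt h)
  have hcov : Z ⊆ ⋃ u ∈ (F.image w : Set (∀ j, Set (X j))), cylinder T n u := fun z hz => by
    obtain ⟨y, hyF, hzy⟩ := hF z hz
    exact mem_biUnion (Finset.mem_coe.2 (Finset.mem_image_of_mem w hyF))
      (hmem y z (hzy.trans_lt hεδ))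
  calc QnCov T f Z n 𝒰
      ≤ ∑' u : (F.image w : Set (∀ j, Set (X j))), cylWeightInf T f n u :=
        iInf₂_le _ ⟨by simp [w, hU𝒰], hcov⟩
    _ = ∑ u ∈ F.image w, cylWeightInf T f n u := Finset.tsum_subtype _ _
    _ ≤ ∑ y ∈ F, cylWeightInf T f n (w y) :=
        Finset.sum_image_le_of_nonneg fun _ _ => zero_le
    _ ≤ partSum T f n F := Finset.sum_le_sum fun y _ =>
        cylWeightInf_le T (hmem y y (by simpa [bowenDist_self] using hε.trans_lt hεδ))

theorem Pn_le_mul_QnCov (hδ : ∀ k, ∀ x y : X k, dist x y < δ → |f k x - f k y| < η)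
    (hε : 0 ≤ ε) (hdiam_ε : coverDiam 𝒰 ≤ ENNReal.ofReal ε)
    (hdiam_δ : coverDiam 𝒰 < ENNReal.ofReal δ) (n : ℕ) :
    Pn T f Z n ε ≤ ENNReal.ofReal (Real.exp (n * η)) * QnCov T f Z n 𝒰 := by
  classical
  set c := ENNReal.ofReal (Real.exp (n * η))
  have hc : c ≠ 0 := by simp [c, Real.exp_pos]
  rw [QnCov, ENNReal.mul_iInf_of_ne hc ENNReal.ofReal_ne_top]
  refine le_iInf fun Γ => ?_
  rw [ENNReal.mul_iInf_of_ne hc ENNReal.ofReal_ne_top]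
  refine le_iInf fun ⟨hΓ𝒰, hΓZ⟩ => iSup₂_le fun E hE => ?_
  have hcyl : ∀ x ∈ E, ∃ u ∈ Γ, x ∈ cylinder T n u := fun x hx => by
    simpa using hΓZ (hE.1 hx)
  choose! φ hφΓ hφ using hcyl
  have hinj : Set.InjOn φ E := hE.injOn T fun x hx y hy hxy =>
    (bowenDist_le_iff T hε).2 fun j hj => (edist_le_ofReal hε).1 <|
      (edist_iter_le_coverDiam T (hΓ𝒰 _ (hφΓ x hx)) (hφ x hx) (hxy ▸ hφ y hy) hj).trans hdiam_ε
  calc partSum T f n E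
      ≤ ∑ x ∈ E, c * cylWeightInf T f n (φ x) := Finset.sum_le_sum fun x hx =>
        ofReal_exp_birk_le_mul_cylWeightInf T hδ hdiam_δ (hΓ𝒰 _ (hφΓ x hx)) (hφ x hx)
    _ = c * ∑ u ∈ E.image φ, cylWeightInf T f n u := by
        rw [Finset.sum_image hinj, Finset.mul_sum]
    _ ≤ c * ∑' u : Γ, cylWeightInf T f n u := by
        gcongr
        rw [← Finset.tsum_subtype]
        exact ENNReal.tsum_mono_subtype _ (by simpa [Set.subset_def] using hφΓ)

end Cylinders

section CoverSeq

variable [∀ k, MetricSpace (X k)]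

theorem exists_coverSeq_coverDiam_le {r : ℝ} (hr : 0 < r) :
    ∃ 𝒰 : CoverSeq X, HasLebesgueNumber 𝒰 ∧ coverDiam 𝒰 ≤ ENNReal.ofReal r := by
  refine ⟨⟨fun k => range fun x : X k => Metric.ball x (r / 2),
    fun k _ ⟨x, hx⟩ => hx ▸ Metric.isOpen_ball,
    fun k x => ⟨_, ⟨x, rfl⟩, Metric.mem_ball_self (half_pos hr)⟩⟩,
    ⟨r / 2, half_pos hr, fun k x => ⟨_, ⟨x, rfl⟩, subset_rfl⟩⟩, ?_⟩
  refine iSup_le fun k => iSup₂_le fun _ ⟨x, hx⟩ => hx ▸ Metric.ediam_le fun y hy z hz => ?_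
  rw [Metric.mem_ball] at hy hz
  exact (edist_le_ofReal hr.le).2 (by linarith [dist_triangle_right y z x])

def diamToZero : Filter {𝒰 : CoverSeq X // HasLebesgueNumber 𝒰} :=
  comap (fun 𝒰 => coverDiam 𝒰.1) (𝓝 0)

instance : (diamToZero (X := X)).NeBot := by
  refine (ENNReal.nhds_zero_basis_Iic.comap _).neBot_iff.2 fun {a} ha => ?_
  obtain ⟨r, -, hr, hra⟩ := ENNReal.lt_iff_exists_real_btwn.1 ha
  obtain ⟨𝒰, h𝒰, hdiam⟩ := exists_coverSeq_coverDiam_le (X := X) (ENNReal.ofReal_pos.1 hr)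
  exact ⟨⟨𝒰, h𝒰⟩, hdiam.trans hra.le⟩

end CoverSeq

section Pressure

variable [∀ k, MetricSpace (X k)]

/-- `Qlow` and `Qup` are definitionally `spanPressure lowRate` and `spanPressure upRate`; likewise
`Plow`, `Pup` for `sepPressure`. -/
def spanPressure (R : (ℕ → ℝ≥0∞) → EReal) (T : ∀ k, X k → X (k + 1)) (f : ∀ k, X k → ℝ)
    (Z : Set (X 0)) : EReal :=
  ⨆ (ε : ℝ) (_ : 0 < ε), R fun n => Qn T f Z n ε

def sepPressure (R : (ℕ → ℝ≥0∞) → EReal) (T : ∀ k, X k → X (k + 1)) (f : ∀ k, X k → ℝ)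
    (Z : Set (X 0)) : EReal :=
  ⨆ (ε : ℝ) (_ : 0 < ε), R fun n => Pn T f Z n ε

def coverPressure (R : (ℕ → ℝ≥0∞) → EReal) (T : ∀ k, X k → X (k + 1)) (f : ∀ k, X k → ℝ)
    (Z : Set (X 0)) : EReal :=
  ⨆ (𝒰 : CoverSeq X) (_ : HasLebesgueNumber 𝒰), R fun n => QnCov T f Z n 𝒰

variable {T} {R : (ℕ → ℝ≥0∞) → EReal} {f : ∀ k, X k → ℝ} {Z : Set (X 0)}

theorem IsGrowthRate.spanPressure_le_sepPressure [∀ k, CompactSpace (X k)]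
    (hR : IsGrowthRate R) (hT : ∀ k, Continuous (T k)) :
    spanPressure R T f Z ≤ sepPressure R T f Z :=
  iSup₂_mono fun _ hε => hR.mono (Qn_le_Pn T hT f hε)

theorem IsGrowthRate.rate_QnCov_le_spanPressure (hR : IsGrowthRate R) {𝒰 : CoverSeq X}
    (h𝒰 : HasLebesgueNumber 𝒰) : R (fun n => QnCov T f Z n 𝒰) ≤ spanPressure R T f Z := by
  obtain ⟨δ, hδ, hLeb⟩ := h𝒰
  exact (hR.mono (QnCov_le_Qn T hLeb (half_pos hδ).le (half_lt_self hδ))).trans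
    (le_iSup₂ (f := fun ε (_ : 0 < ε) => R fun n => Qn T f Z n ε) _ (half_pos hδ))

theorem IsGrowthRate.exists_rate_Pn_le_add_rate_QnCov (hR : IsGrowthRate R)
    (hfe : EquicontPotential f) {ε η : ℝ} (hε : 0 < ε) (hη : 0 < η) :
    ∃ ρ > 0, ∀ 𝒰 : CoverSeq X, coverDiam 𝒰 < ENNReal.ofReal ρ →
      R (fun n => Pn T f Z n ε) ≤ η + R (fun n => QnCov T f Z n 𝒰) := by
  obtain ⟨δ, hδ, hmod⟩ := hfe η hη
  refine ⟨min ε δ, lt_min hε hδ, fun 𝒰 h𝒰 => hR η _ _ (Pn_le_mul_QnCov T hmod hε.le ?_ ?_)⟩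
  · exact h𝒰.le.trans (ENNReal.ofReal_le_ofReal (min_le_left _ _))
  · exact h𝒰.trans_le (ENNReal.ofReal_le_ofReal (min_le_right _ _))

theorem IsGrowthRate.tendsto_rate_QnCov_sepPressure [∀ k, CompactSpace (X k)]
    (hR : IsGrowthRate R) (hT : ∀ k, Continuous (T k)) (hfe : EquicontPotential f) :
    Tendsto (fun 𝒰 : {𝒰 : CoverSeq X // HasLebesgueNumber 𝒰} => R fun n => QnCov T f Z n 𝒰.1)
      diamToZero (𝓝 (sepPressure R T f Z)) := by
  refine tendsto_order.2 ⟨fun b hb => ?_, fun b hb => Eventually.of_forall fun 𝒰 =>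
    ((hR.rate_QnCov_le_spanPressure 𝒰.2).trans (hR.spanPressure_le_sepPressure hT)).trans_lt hb⟩
  obtain ⟨ε, hε, hbε⟩ := lt_biSup_iff.1 hb
  obtain ⟨η, hη, hbη⟩ := EReal.exists_pos_coe_add_lt hbε
  obtain ⟨ρ, hρ, hρP⟩ := hR.exists_rate_Pn_le_add_rate_QnCov (Z := Z) hfe hε hη
  refine mem_comap.2 ⟨Iio (ENNReal.ofReal ρ), Iio_mem_nhds (ENNReal.ofReal_pos.2 hρ),
    fun 𝒰 h𝒰 => show b < _ from lt_of_not_ge fun hle => ?_⟩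
  exact (hbη.trans_le (hρP 𝒰.1 h𝒰)).not_ge (add_le_add_right hle _)

theorem IsGrowthRate.sepPressure_le_coverPressure [∀ k, CompactSpace (X k)]
    (hR : IsGrowthRate R) (hT : ∀ k, Continuous (T k)) (hfe : EquicontPotential f) :
    sepPressure R T f Z ≤ coverPressure R T f Z :=
  le_of_tendsto' (hR.tendsto_rate_QnCov_sepPressure hT hfe) fun 𝒰 =>
    le_iSup₂ (f := fun 𝒰 (_ : HasLebesgueNumber 𝒰) => R fun n => QnCov T f Z n 𝒰) 𝒰.1 𝒰.2

theorem IsGrowthRate.coverPressure_le_spanPressure (hR : IsGrowthRate R) :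
    coverPressure R T f Z ≤ spanPressure R T f Z :=
  iSup₂_le fun _ h𝒰 => hR.rate_QnCov_le_spanPressure h𝒰

theorem IsGrowthRate.spanPressure_eq_sepPressure [∀ k, CompactSpace (X k)]
    (hR : IsGrowthRate R) (hT : ∀ k, Continuous (T k)) (hfe : EquicontPotential f) :
    spanPressure R T f Z = sepPressure R T f Z :=
  le_antisymm (hR.spanPressure_le_sepPressure hT)
    ((hR.sepPressure_le_coverPressure hT hfe).trans hR.coverPressure_le_spanPressure)

theorem IsGrowthRate.spanPressure_eq_coverPressure [∀ k, CompactSpace (X k)]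
    (hR : IsGrowthRate R) (hT : ∀ k, Continuous (T k)) (hfe : EquicontPotential f) :
    spanPressure R T f Z = coverPressure R T f Z :=
  le_antisymm ((hR.spanPressure_le_sepPressure hT).trans (hR.sepPressure_le_coverPressure hT hfe))
    hR.coverPressure_le_spanPressure

theorem IsGrowthRate.tendsto_rate_QnCov_spanPressure [∀ k, CompactSpace (X k)]
    (hR : IsGrowthRate R) (hT : ∀ k, Continuous (T k)) (hfe : EquicontPotential f) :
    Tendsto (fun 𝒰 : {𝒰 : CoverSeq X // HasLebesgueNumber 𝒰} => R fun n => QnCov T f Z n 𝒰.1)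
      diamToZero (𝓝 (spanPressure R T f Z)) :=
  hR.spanPressure_eq_sepPressure hT hfe ▸ hR.tendsto_rate_QnCov_sepPressure hT hfe

end Pressure

end NDS

theorem pressure_via_open_covers_general {X : ℕ → Type*} [∀ k, MetricSpace (X k)]
    [∀ k, CompactSpace (X k)] (T : ∀ k, X k → X (k + 1)) (hT : ∀ k, Continuous (T k))
    (f : ∀ k, X k → ℝ) (hfe : NDS.EquicontPotential f)
    (Z : Set (X 0)) :
    (NDS.Qlow T f Z = NDS.Plow T f Z ∧ NDS.Qup T f Z = NDS.Pup T f Z) ∧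
    NDS.Qlow T f Z = (⨆ (𝒰 : NDS.CoverSeq X) (_ : NDS.HasLebesgueNumber 𝒰),
        NDS.lowRate fun n => NDS.QnCov T f Z n 𝒰) ∧
    NDS.Qup T f Z = (⨆ (𝒰 : NDS.CoverSeq X) (_ : NDS.HasLebesgueNumber 𝒰),
        NDS.upRate fun n => NDS.QnCov T f Z n 𝒰) ∧
    Filter.Tendsto (fun 𝒰 : {𝒰 : NDS.CoverSeq X // NDS.HasLebesgueNumber 𝒰} =>
        NDS.lowRate fun n => NDS.QnCov T f Z n 𝒰.1)
      (Filter.comap (fun 𝒰 : {𝒰 : NDS.CoverSeq X // NDS.HasLebesgueNumber 𝒰} =>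
        NDS.coverDiam 𝒰.1) (nhds 0)) (nhds (NDS.Qlow T f Z)) ∧
    Filter.Tendsto (fun 𝒰 : {𝒰 : NDS.CoverSeq X // NDS.HasLebesgueNumber 𝒰} =>
        NDS.upRate fun n => NDS.QnCov T f Z n 𝒰.1)
      (Filter.comap (fun 𝒰 : {𝒰 : NDS.CoverSeq X // NDS.HasLebesgueNumber 𝒰} =>
        NDS.coverDiam 𝒰.1) (nhds 0)) (nhds (NDS.Qup T f Z)) :=
  have hlow : NDS.IsGrowthRate NDS.lowRate := NDS.isGrowthRate_lowRate
  have hup : NDS.IsGrowthRate NDS.upRate := NDS.isGrowthRate_upRate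
  ⟨⟨hlow.spanPressure_eq_sepPressure hT hfe, hup.spanPressure_eq_sepPressure hT hfe⟩,
    hlow.spanPressure_eq_coverPressure hT hfe, hup.spanPressure_eq_coverPressure hT hfe,
    hlow.tendsto_rate_QnCov_spanPressure hT hfe, hup.tendsto_rate_QnCov_spanPressure hT hfe⟩

/-- For an equicontinuous potential `f`, the lower and upper topological
pressures exist and can be computed via open covers: they are the supremum over all cover
sequences `𝒰` with a Lebesgue number of the corresponding rates, and also the limits as
`diam 𝒰 → 0` of those rates. -/
theorem pressure_via_open_covers {X : ℕ → Type*} [∀ k, MetricSpace (X k)]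
    [∀ k, CompactSpace (X k)] (T : ∀ k, X k → X (k + 1)) (hT : ∀ k, Continuous (T k))
    (f : ∀ k, X k → ℝ) (hf : ∀ k, Continuous (f k)) (hfe : NDS.EquicontPotential f)
    (Z : Set (X 0)) :
    (NDS.Qlow T f Z = NDS.Plow T f Z ∧ NDS.Qup T f Z = NDS.Pup T f Z) ∧
    NDS.Qlow T f Z = (⨆ (𝒰 : NDS.CoverSeq X) (_ : NDS.HasLebesgueNumber 𝒰),
        NDS.lowRate fun n => NDS.QnCov T f Z n 𝒰) ∧
    NDS.Qup T f Z = (⨆ (𝒰 : NDS.CoverSeq X) (_ : NDS.HasLebesgueNumber 𝒰),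
        NDS.upRate fun n => NDS.QnCov T f Z n 𝒰) ∧
    Filter.Tendsto (fun 𝒰 : {𝒰 : NDS.CoverSeq X // NDS.HasLebesgueNumber 𝒰} =>
        NDS.lowRate fun n => NDS.QnCov T f Z n 𝒰.1)
      (Filter.comap (fun 𝒰 : {𝒰 : NDS.CoverSeq X // NDS.HasLebesgueNumber 𝒰} =>
        NDS.coverDiam 𝒰.1) (nhds 0)) (nhds (NDS.Qlow T f Z)) ∧
    Filter.Tendsto (fun 𝒰 : {𝒰 : NDS.CoverSeq X // NDS.HasLebesgueNumber 𝒰} =>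
        NDS.upRate fun n => NDS.QnCov T f Z n 𝒰.1)
      (Filter.comap (fun 𝒰 : {𝒰 : NDS.CoverSeq X // NDS.HasLebesgueNumber 𝒰} =>
        NDS.coverDiam 𝒰.1) (nhds 0)) (nhds (NDS.Qup T f Z)) :=
  pressure_via_open_covers_general T hT f hfe Z
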